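/- For any composition β, one has β* ∼ β (i.e., M(β*) = M(β)); and for any compositions γ₁, …, γₖ, one has γ₁∘γ₂∘⋯∘γₖ ∼ γ₁*∘γ₂*∘⋯∘γₖ*. -/

import Mathlib

/-- The size `|β|` of a composition, i.e. the sum of its components. -/
def size (l : List ℕ+) : ℕ := (l.map fun x => (x : ℕ)).sum

/-- Near concatenation `α ⊙ β` of two (nonempty) compositions. -/
def odot (a b : List ℕ+) : List ℕ+ :=
  if a = [] then b
  else if b = [] then a
  else a.dropLast ++ (a.getLastI + b.headI) :: b.tail

/-- `β^{⊙ m}`, the `m`-fold near concatenation of `β` with itself. -/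
def odotPow (b : List ℕ+) : ℕ → List ℕ+
  | 0 => []
  | n + 1 => odot (odotPow b n) b

/-- The composition operation `α ∘ β = β^{⊙α₁} · β^{⊙α₂} ⋯ β^{⊙αₖ}`. -/
def compOp (a b : List ℕ+) : List ℕ+ := (a.map fun ai => odotPow b (ai : ℕ)).flatten

/-- `β₁ ∘ β₂ ∘ ⋯ ∘ βₖ` (the composition `1` is a two-sided identity for `∘`). -/
def compFold (l : List (List ℕ+)) : List ℕ+ := l.foldr compOp [1]

/-- The list of all coarsenings of a composition. -/
def coarsenings : List ℕ+ → List (List ℕ+)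
  | [] => [[]]
  | [a] => [[a]]
  | a :: b :: t => ((coarsenings (b :: t)).map (a :: ·)) ++ coarsenings ((a + b) :: t)
  termination_by l => l.length

/-- The multiset `M(β)` of partitions (as multisets of parts) of all coarsenings of `β`. -/
def Mset (b : List ℕ+) : Multiset (Multiset ℕ+) :=
  ↑((coarsenings b).map fun l => (l : Multiset ℕ+))

/-!
Reversal maps the coarsenings of `β` bijectively onto those of `β*`, and reversing a coarsening
does not change its multiset of parts, so `M(β*) = M(β)`. For the second claim, reversal
distributes over near concatenation as `(α ⊙ β)* = β* ⊙ α*`; since `β` commutes with `β^{⊙m}`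
under the associative `⊙`, this gives `(β^{⊙m})* = (β*)^{⊙m}`, hence `(α ∘ β)* = α* ∘ β*` and
`(γ₁ ∘ ⋯ ∘ γₖ)* = γ₁* ∘ ⋯ ∘ γₖ*`, which reduces the claim to the first one.
-/

@[simp]
lemma odot_nil_left (b : List ℕ+) : odot [] b = b := by
  simp [odot]

@[simp]
lemma odot_nil_right (a : List ℕ+) : odot a [] = a := by
  unfold odot; split <;> simp_all

lemma odot_append_singleton_cons (as : List ℕ+) (x y : ℕ+) (bs : List ℕ+) :
    odot (as ++ [x]) (y :: bs) = as ++ (x + y) :: bs := by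
  simp [odot, List.getLastI_eq_getLast?_getD]

lemma odot_singleton_cons (x y : ℕ+) (bs : List ℕ+) : odot [x] (y :: bs) = (x + y) :: bs :=
  odot_append_singleton_cons [] x y bs

lemma odot_assoc (a b c : List ℕ+) : odot (odot a b) c = odot a (odot b c) := by
  rcases a.eq_nil_or_concat' with rfl | ⟨as, x, rfl⟩
  · simp
  rcases eq_or_ne c [] with rfl | hc
  · simp
  obtain ⟨z, cs, rfl⟩ := List.exists_cons_of_ne_nil hc
  rcases eq_or_ne b [] with rfl | hb
  · simp
  obtain ⟨y, bt, rfl⟩ := List.exists_cons_of_ne_nil hb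
  rcases bt.eq_nil_or_concat' with rfl | ⟨bs, w, rfl⟩
  · rw [odot_append_singleton_cons as x y [], odot_singleton_cons, odot_append_singleton_cons,
      odot_append_singleton_cons, add_assoc]
  · have hab : odot (as ++ [x]) (y :: (bs ++ [w])) = (as ++ (x + y) :: bs) ++ [w] := by
      rw [odot_append_singleton_cons]; simp
    have hbc : odot (y :: (bs ++ [w])) (z :: cs) = y :: (bs ++ (w + z) :: cs) := by
      rw [← List.cons_append, odot_append_singleton_cons]; simp
    rw [hab, hbc, odot_append_singleton_cons, odot_append_singleton_cons]
    simp

lemma odot_cons (c : ℕ+) {l : List ℕ+} (hl : l ≠ []) (b : List ℕ+) :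
    odot (c :: l) b = c :: odot l b := by
  rcases eq_or_ne b [] with rfl | hb
  · simp
  obtain ⟨y, bs, rfl⟩ := List.exists_cons_of_ne_nil hb
  obtain ⟨ls, x, rfl⟩ := (l.eq_nil_or_concat').resolve_left hl
  rw [← List.cons_append, odot_append_singleton_cons, odot_append_singleton_cons, List.cons_append]

lemma reverse_odot (a b : List ℕ+) : (odot a b).reverse = odot b.reverse a.reverse := by
  rcases a.eq_nil_or_concat' with rfl | ⟨as, x, rfl⟩
  · simp
  rcases eq_or_ne b [] with rfl | hb
  · simp
  obtain ⟨y, bs, rfl⟩ := List.exists_cons_of_ne_nil hb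
  simp [odot_append_singleton_cons, add_comm]

lemma odot_odotPow_comm (b : List ℕ+) (n : ℕ) :
    odot b (odotPow b n) = odot (odotPow b n) b := by
  induction n with
  | zero => simp [odotPow]
  | succ n ih => rw [odotPow, ← odot_assoc, ih]

lemma reverse_odotPow (b : List ℕ+) (n : ℕ) :
    (odotPow b n).reverse = odotPow b.reverse n := by
  induction n with
  | zero => rfl
  | succ n ih => rw [odotPow, reverse_odot, ih, odotPow, odot_odotPow_comm]

lemma reverse_compOp (a b : List ℕ+) : (compOp a b).reverse = compOp a.reverse b.reverse := by
  induction a with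
  | nil => rfl
  | cons ai a ih => simp_all [compOp, reverse_odotPow]

lemma reverse_compFold (gs : List (List ℕ+)) :
    (compFold gs).reverse = compFold (gs.map List.reverse) := by
  induction gs with
  | nil => rfl
  | cons g gs ih =>
    simp only [compFold, List.foldr_cons, List.map_cons] at ih ⊢
    rw [reverse_compOp, ih]

lemma coarsenings_cons (c : ℕ+) {l : List ℕ+} (hl : l ≠ []) :
    coarsenings (c :: l) = (coarsenings l).map (c :: ·) ++ coarsenings (odot [c] l) := by
  obtain ⟨d, s, rfl⟩ := List.exists_cons_of_ne_nil hl
  rw [coarsenings, odot_singleton_cons]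

lemma coarsenings_append_singleton_perm {u : List ℕ+} (hu : u ≠ []) (a : ℕ+) :
    (coarsenings (u ++ [a])).Perm
      ((coarsenings u).map (· ++ [a]) ++ coarsenings (odot u [a])) := by
  match u, hu with
  | [c], _ => simp [coarsenings, odot_singleton_cons]
  | c :: d :: s, _ =>
    have ih₁ := coarsenings_append_singleton_perm (u := d :: s) (List.cons_ne_nil _ _) a
    have ih₂ := coarsenings_append_singleton_perm (u := (c + d) :: s) (List.cons_ne_nil _ _) a
    have hne : odot (d :: s) [a] ≠ [] := by unfold odot; split_ifs <;> simp
    have hmerge : odot [c] (odot (d :: s) [a]) = odot ((c + d) :: s) [a] := by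
      rw [← odot_assoc, odot_singleton_cons]
    rw [List.cons_append, List.cons_append, coarsenings, odot_cons c (List.cons_ne_nil _ _),
      coarsenings_cons c hne, hmerge, coarsenings]
    -- Splitting at the first and at the last gap yields the same four blocks in different orders.
    refine ((ih₁.map _).append ih₂).trans ?_
    simp only [List.map_append, List.map_map, Function.comp_def, List.cons_append,
      List.append_assoc]
    exact List.Perm.append_left _ (List.perm_append_comm_assoc _ _ _)
termination_by u.length

lemma coarsenings_reverse_perm (l : List ℕ+) :
    (coarsenings l.reverse).Perm ((coarsenings l).map List.reverse) := by
  match l with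
  | [] => simp [coarsenings]
  | [a] => simp [coarsenings]
  | a :: b :: t =>
    have ih₁ := coarsenings_reverse_perm (b :: t)
    have ih₂ := coarsenings_reverse_perm ((a + b) :: t)
    rw [List.reverse_cons, coarsenings, ← odot_singleton_cons]
    refine (coarsenings_append_singleton_perm (by simp) a).trans ?_
    rw [List.map_append, ← List.reverse_singleton (a := a), ← reverse_odot, odot_singleton_cons,
      List.reverse_singleton]
    refine List.Perm.append ?_ ih₂
    simpa [Function.comp_def] using ih₁.map (· ++ [a])
termination_by l.length

lemma Mset_reverse (l : List ℕ+) : Mset l.reverse = Mset l := by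
  simp only [Mset, List.map_id', bind_pure_comp, List.map_eq_map, Multiset.coe_eq_coe]
  refine ((coarsenings_reverse_perm l).map _).trans ?_
  simp [Function.comp_def, Multiset.coe_reverse]

/-- For any composition `β`, `β* ∼ β` (i.e. `M(β*) = M(β)`); and for
any compositions `γ₁, …, γₖ`, `γ₁∘⋯∘γₖ ∼ γ₁*∘⋯∘γₖ*`. -/
theorem reverse_equiv :
    (∀ β : List ℕ+, β ≠ [] → Mset β.reverse = Mset β) ∧
    (∀ gs : List (List ℕ+), gs ≠ [] → (∀ g ∈ gs, g ≠ []) →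
      Mset (compFold gs) = Mset (compFold (gs.map List.reverse))) :=
  ⟨fun β _ => Mset_reverse β,
    fun gs _ _ => by rw [← reverse_compFold, Mset_reverse]⟩
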